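/- Let Φ(q₁,q₂,z) = (q₁ + p z q₁⁻¹q₂⁻¹)(1 - q₁q₂⁻¹)(1 - q₁q₂²)(1 - q₁²q₂) · ∏_{n≥1}[(1 - z^n(q₁²q₂+q₁⁻²q₂⁻¹)+z^{2n})(1 - z^n(q₁q₂²+q₁⁻¹q₂⁻²)+z^{2n})(1 - z^n(q₁q₂⁻¹+q₁⁻¹q₂)+z^{2n})]^{a_n}, viewed as a formal power series in z with coefficients Laurent polynomials in q₁,q₂, depending on a sequence of integers (a_n)_{n≥1} and a fixed positive integer p with a₁ = p. Then for each N ≥ 2, the coefficient of z^N in Φ has q₁⁻¹q₂⁻¹-coefficient of the form c·a_N + F(a₁,…,a_{N-1}) where c is a nonzero integer independent of the sequence; consequently, the requirement that the q₁⁻¹q₂⁻¹-coefficient of every z^N-coefficient (N≥1) vanish determines the sequence (a_n) uniquely given a₁ = p. -/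

import Mathlib

open PowerSeries

/-- The ring of Laurent polynomials in two variables `q₁, q₂` over `ℚ`. -/
noncomputable abbrev LaurentTwo := AddMonoidAlgebra ℚ (ℤ × ℤ)

/-- The monomial `q₁^i q₂^j`. -/
noncomputable def qm (i j : ℤ) : LaurentTwo := AddMonoidAlgebra.single (i, j) (1 : ℚ)

/-- The quadratic factor
`(1 - z^n(q₁²q₂+q₁⁻²q₂⁻¹)+z^{2n})(1 - z^n(q₁q₂²+q₁⁻¹q₂⁻²)+z^{2n})(1 - z^n(q₁q₂⁻¹+q₁⁻¹q₂)+z^{2n})`. -/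
noncomputable def adjFactor (n : ℕ) : PowerSeries LaurentTwo :=
  (1 - X ^ n * C (qm 2 1 + qm (-2) (-1)) + X ^ (2 * n)) *
    (1 - X ^ n * C (qm 1 2 + qm (-1) (-2)) + X ^ (2 * n)) *
    (1 - X ^ n * C (qm 1 (-1) + qm (-1) 1) + X ^ (2 * n))

/-- Integer power of a power series (the factors below are invertible, having constant
coefficient `1`, so `Ring.inverse` computes the genuine inverse). -/
noncomputable def zPow (f : PowerSeries LaurentTwo) (m : ℤ) : PowerSeries LaurentTwo :=
  f ^ m.toNat * Ring.inverse (f ^ (-m).toNat)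

/-- The prefactor `(q₁ + p z q₁⁻¹q₂⁻¹)(1 - q₁q₂⁻¹)(1 - q₁q₂²)(1 - q₁²q₂)`. -/
noncomputable def preFactor (p : ℤ) : PowerSeries LaurentTwo :=
  (C (qm 1 0) + (p : PowerSeries LaurentTwo) * X * C (qm (-1) (-1))) *
    (1 - C (qm 1 (-1))) * (1 - C (qm 1 2)) * (1 - C (qm 2 1))

/-- The truncation of `Φ(q₁,q₂,z)` whose coefficient of `z^N` agrees with that of the full
infinite product (only the factors with `n ≤ N` contribute to it). -/
noncomputable def PhiTrunc (p : ℤ) (a : ℕ → ℤ) (N : ℕ) : PowerSeries LaurentTwo :=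
  preFactor p * ∏ n ∈ Finset.Icc 1 N, zPow (adjFactor n) (a n)

/-- The residue at `(0,0)` (coefficient of `q₁⁻¹q₂⁻¹`) of the coefficient of `z^N` in `Φ`. -/
noncomputable def resPhi (p : ℤ) (N : ℕ) (a : ℕ → ℤ) : ℚ :=
  (coeff N (PhiTrunc p a N)).coeff (-1, -1)

namespace St18

/-! ### Laurent-polynomial computations -/

lemma qm_mul (i j k l : ℤ) : qm i j * qm k l = qm (i+k) (j+l) := by
  simp [qm, AddMonoidAlgebra.single_mul_single, Prod.mk_add_mk]

lemma one_eq_qm : (1 : LaurentTwo) = qm 0 0 := rfl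

noncomputable def Tn : LaurentTwo := qm 2 1 + qm (-2) (-1) + qm 1 2 + qm (-1) (-2) + qm 1 (-1) + qm (-1) 1

noncomputable def P0 : LaurentTwo := qm 1 0 * (1 - qm 1 (-1)) * (1 - qm 1 2) * (1 - qm 2 1)

noncomputable def ev (v : ℤ × ℤ) : LaurentTwo →+ ℚ :=
  (Finsupp.applyAddHom v).comp AddMonoidAlgebra.coeffAddEquiv.toAddMonoidHom

lemma ev_apply (x : LaurentTwo) (v : ℤ × ℤ) : x.coeff v = ev v x := rfl

lemma ev_qm (i j : ℤ) (v : ℤ × ℤ) : ev v (qm i j) = if (i,j) = v then (1:ℚ) else 0 := by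
  show (AddMonoidAlgebra.single (i,j) (1:ℚ)).coeff v = _
  rw [AddMonoidAlgebra.coeff_single]
  simp [Finsupp.single_apply]

lemma key_eval : ev (-1, -1) (P0 * Tn) = 1 := by
  rw [← ev_apply]
  simp only [P0, Tn, mul_add, add_mul, sub_mul, mul_sub, mul_one, one_mul, qm_mul, one_eq_qm]
  norm_num
  simp only [ev_apply]
  simp only [map_add, map_sub, ev_qm]
  norm_num

/-! ### Nice power series -/

structure Nice (N : ℕ) (f : PowerSeries LaurentTwo) : Prop where
  c0 : constantCoeff f = 1
  mid : ∀ j, 0 < j → j < N → coeff j f = 0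

lemma coeff_zero (f : PowerSeries LaurentTwo) : coeff 0 f = constantCoeff f :=
  congrFun coeff_zero_eq_constantCoeff f

lemma Nice.mul {N : ℕ} {f g : PowerSeries LaurentTwo} (hf : Nice N f) (hg : Nice N g) :
    Nice N (f * g) := by
  constructor
  · rw [map_mul, hf.c0, hg.c0, one_mul]
  · intro j hj hjN
    rw [coeff_mul]
    refine Finset.sum_eq_zero fun x hx => ?_
    rw [Finset.HasAntidiagonal.mem_antidiagonal] at hx
    rcases Nat.eq_zero_or_pos x.1 with h1 | h1
    · have : x.2 = j := by omega
      rw [this, hg.mid j hj hjN, mul_zero]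
    · rw [hf.mid x.1 h1 (by omega), zero_mul]

lemma coeff_mul_nice {N : ℕ} (hN : 1 ≤ N) {g : PowerSeries LaurentTwo} (hg : Nice N g)
    (f : PowerSeries LaurentTwo) :
    coeff N (f * g)
      = coeff N f + constantCoeff f * coeff N g := by
  rw [coeff_mul]
  have h1 : ((N, 0) : ℕ × ℕ) ∈ Finset.HasAntidiagonal.antidiagonal N := by simp
  have h2 : ((0, N) : ℕ × ℕ) ∈ (Finset.HasAntidiagonal.antidiagonal N).erase (N, 0) := by
    simp [Finset.mem_erase, Prod.ext_iff]; omega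
  rw [← Finset.add_sum_erase _ _ h1, ← Finset.add_sum_erase _ _ h2]
  have hz : ∑ x ∈ ((Finset.HasAntidiagonal.antidiagonal N).erase (N,0)).erase (0,N),
      coeff x.1 f * coeff x.2 g = 0 := by
    refine Finset.sum_eq_zero fun x hx => ?_
    simp only [Finset.mem_erase, Finset.HasAntidiagonal.mem_antidiagonal, Prod.ext_iff] at hx
    obtain ⟨hxa, hxb, hab⟩ := hx
    have hb1 : 0 < x.2 := by
      rcases Nat.eq_zero_or_pos x.2 with h | h
      · exfalso; apply hxb; exact Prod.ext_iff.mpr ⟨by omega, by omega⟩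
      · exact h
    have hb2 : x.2 < N := by
      rcases Nat.lt_or_ge x.2 N with h | h
      · exact h
      · exfalso; apply hxa; exact Prod.ext_iff.mpr ⟨by omega, by omega⟩
    rw [hg.mid x.2 hb1 hb2, mul_zero]
  rw [hz, add_zero, coeff_zero, coeff_zero, hg.c0, mul_one]
  try ring

lemma Nice.coeff_mul_self {N : ℕ} (hN : 1 ≤ N) {f g : PowerSeries LaurentTwo}
    (hf : Nice N f) (hg : Nice N g) :
    coeff N (f * g) = coeff N f + coeff N g := by
  rw [coeff_mul_nice hN hg, hf.c0, one_mul]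

lemma Nice.one {N : ℕ} : Nice N (1 : PowerSeries LaurentTwo) :=
  ⟨map_one _, fun j hj _ => by
    rw [show (1 : PowerSeries LaurentTwo) = C 1 from rfl, coeff_C]
    simp [Nat.pos_iff_ne_zero.mp hj]⟩

lemma coeff_one (N : ℕ) (hN : 1 ≤ N) : coeff N (1 : PowerSeries LaurentTwo) = 0 := by
  rw [show (1 : PowerSeries LaurentTwo) = C 1 from rfl, coeff_C]
  simp [Nat.one_le_iff_ne_zero.mp hN]

lemma Nice.pow {N : ℕ} (hN : 1 ≤ N) {f : PowerSeries LaurentTwo} (hf : Nice N f) (t : ℕ) :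
    Nice N (f ^ t) ∧ coeff N (f ^ t) = t • coeff N f := by
  induction t with
  | zero =>
    rw [pow_zero]
    exact ⟨Nice.one, by simp [coeff_one N hN]⟩
  | succ t ih =>
    have h1 : Nice N (f ^ t * f) := ih.1.mul hf
    rw [pow_succ]
    refine ⟨h1, ?_⟩
    rw [Nice.coeff_mul_self hN ih.1 hf, ih.2, succ_nsmul]

lemma Nice.isUnit {N : ℕ} {f : PowerSeries LaurentTwo} (hf : Nice N f) : IsUnit f := by
  rw [PowerSeries.isUnit_iff_constantCoeff, hf.c0]; exact isUnit_one

lemma Nice.inverse {N : ℕ} (hN : 1 ≤ N) {f : PowerSeries LaurentTwo} (hf : Nice N f) :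
    Nice N (Ring.inverse f) ∧
      coeff N (Ring.inverse f) = - coeff N f := by
  have hmul : f * Ring.inverse f = 1 := Ring.mul_inverse_cancel f hf.isUnit
  have hc0 : constantCoeff (Ring.inverse f) = 1 := by
    have := congrArg (constantCoeff) hmul
    rw [map_mul, hf.c0, one_mul, map_one] at this
    exact this
  have hmid : ∀ j, 0 < j → j < N → coeff j (Ring.inverse f) = 0 := by
    intro j hj hjN
    have h0 : coeff j (f * Ring.inverse f) = 0 := by
      rw [hmul, coeff_one j hj]
    rw [coeff_mul] at h0
    rw [Finset.sum_eq_single_of_mem ((0 : ℕ), j) (by simp)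
      (fun x hx hne => by
        rw [Finset.HasAntidiagonal.mem_antidiagonal] at hx
        rcases Nat.eq_zero_or_pos x.1 with h | h
        · exact absurd (Prod.ext_iff.mpr ⟨by omega, by omega⟩) hne
        · rw [hf.mid x.1 h (by omega), zero_mul])] at h0
    rw [coeff_zero, hf.c0, one_mul] at h0
    exact h0
  have hnice : Nice N (Ring.inverse f) := ⟨hc0, hmid⟩
  refine ⟨hnice, ?_⟩
  have h0 : coeff N (f * Ring.inverse f) = 0 := by rw [hmul, coeff_one N hN]
  rw [coeff_mul_nice hN hnice, hf.c0, one_mul] at h0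
  exact eq_neg_of_add_eq_zero_right h0

lemma Nice.zpow_fact {N : ℕ} (hN : 1 ≤ N) {f : PowerSeries LaurentTwo} (hf : Nice N f) (m : ℤ) :
    Nice N (_root_.zPow f m) ∧
      coeff N (_root_.zPow f m) = m • coeff N f := by
  obtain ⟨hp1, hp2⟩ := hf.pow hN m.toNat
  obtain ⟨hq1, hq2⟩ := hf.pow hN (-m).toNat
  obtain ⟨hi1, hi2⟩ := hq1.inverse hN
  refine ⟨hp1.mul hi1, ?_⟩
  rw [show _root_.zPow f m = f ^ m.toNat * Ring.inverse (f ^ (-m).toNat) from rfl]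
  rw [Nice.coeff_mul_self hN hp1 hi1, hp2, hi2, hq2]
  simp only [nsmul_eq_mul, zsmul_eq_mul]
  have hm : ((m.toNat : ℤ) - ((-m).toNat : ℤ)) = m := by omega
  have hc := congrArg (fun z : ℤ => (z : LaurentTwo) * coeff N f) hm
  push_cast at hc
  linear_combination hc

/-! ### adjFactor facts -/

lemma factor_nice (N : ℕ) (hN : 1 ≤ N) (s : LaurentTwo) :
    Nice N (1 - X ^ N * C s + X ^ (2 * N)) ∧
      coeff N (1 - X ^ N * C s + X ^ (2 * N)) = -s := by
  have hcoeff : ∀ j : ℕ, coeff j (1 - X ^ N * C s + X ^ (2 * N)) =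
      (if j = 0 then 1 else 0) - (if N ≤ j then (if j - N = 0 then s else 0) else 0)
        + (if j = 2 * N then 1 else 0) := by
    intro j
    rw [map_add, map_sub, mul_comm (X ^ N) (C s), coeff_mul_X_pow', coeff_X_pow]
    rw [show (1 : PowerSeries LaurentTwo) = C 1 from rfl, coeff_C, coeff_C]
  constructor
  · constructor
    · rw [← coeff_zero, hcoeff 0]
      have h2 : ¬ (N ≤ 0) := by omega
      have h3 : ¬ ((0:ℕ) = 2 * N) := by omega
      simp [h2, h3]
    · intro j hj hjN
      rw [hcoeff j]
      have h1 : ¬ (j = 0) := by omega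
      have h2 : ¬ (N ≤ j) := by omega
      have h3 : ¬ (j = 2 * N) := by omega
      simp [h1, h2, h3]
  · rw [hcoeff N]
    have h1 : ¬ (N = 0) := by omega
    have h3 : ¬ (N = 2 * N) := by omega
    simp [h1, h3]

lemma adjFactor_nice (n : ℕ) (hn : 1 ≤ n) :
    Nice n (adjFactor n) ∧ coeff n (adjFactor n) = -Tn := by
  obtain ⟨h1, e1⟩ := factor_nice n hn (qm 2 1 + qm (-2) (-1))
  obtain ⟨h2, e2⟩ := factor_nice n hn (qm 1 2 + qm (-1) (-2))
  obtain ⟨h3, e3⟩ := factor_nice n hn (qm 1 (-1) + qm (-1) 1)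
  refine ⟨(h1.mul h2).mul h3, ?_⟩
  rw [show adjFactor n = _ * _ * _ from rfl]
  rw [Nice.coeff_mul_self hn (h1.mul h2) h3, Nice.coeff_mul_self hn h1 h2, e1, e2, e3, Tn]
  try abel

lemma c0_zPow (f : PowerSeries LaurentTwo) (h : constantCoeff f = 1) (m : ℤ) :
    constantCoeff (zPow f m) = 1 := by
  have hu : IsUnit (f ^ (-m).toNat) := by
    rw [PowerSeries.isUnit_iff_constantCoeff, map_pow, h, one_pow]; exact isUnit_one
  have hinv : constantCoeff (Ring.inverse (f ^ (-m).toNat)) = 1 := by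
    have := congrArg (constantCoeff) (Ring.mul_inverse_cancel _ hu)
    rw [map_mul, map_pow, h, one_pow, one_mul, map_one] at this
    exact this
  rw [show zPow f m = f ^ m.toNat * Ring.inverse (f ^ (-m).toNat) from rfl,
    map_mul, map_pow, h, one_pow, one_mul, hinv]

/-! ### decomposition -/

lemma c0_preFactor (p : ℤ) : constantCoeff (preFactor p) = P0 := by
  rw [preFactor, P0]
  rw [map_mul, map_mul, map_mul, map_add, map_mul, map_mul, map_sub, map_sub, map_sub]
  simp [constantCoeff_X, constantCoeff_C]

lemma resPhi_decomp (p : ℤ) (N : ℕ) (hN : 1 ≤ N) (a : ℕ → ℤ) :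
    resPhi p N a = -(a N : ℚ) + resPhi p N (Function.update a N 0) := by
  obtain ⟨M, rfl⟩ : ∃ M, N = M + 1 := ⟨N - 1, by omega⟩
  set G : PowerSeries LaurentTwo :=
    preFactor p * ∏ n ∈ Finset.Icc 1 M, zPow (adjFactor n) (a n) with hG
  have hsplit : ∀ b : ℕ → ℤ, (∀ n, n ≤ M → b n = a n) →
      PhiTrunc p b (M+1) = G * zPow (adjFactor (M+1)) (b (M+1)) := by
    intro b hb
    rw [PhiTrunc, Finset.prod_Icc_succ_top (by omega)]
    rw [← mul_assoc, hG]
    congr 2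
    exact Finset.prod_congr rfl fun n hn => by
      rw [hb n (Finset.mem_Icc.mp hn).2]
  obtain ⟨hA, hAe⟩ := adjFactor_nice (M+1) (by omega)
  obtain ⟨hZ, hZe⟩ := hA.zpow_fact (by omega) (a (M+1))
  have h1 : PhiTrunc p a (M+1) = G * zPow (adjFactor (M+1)) (a (M+1)) :=
    hsplit a fun n _ => rfl
  have h2 : PhiTrunc p (Function.update a (M+1) 0) (M+1) = G := by
    rw [hsplit (Function.update a (M+1) 0) (fun n hn => Function.update_of_ne (by omega) _ _)]
    rw [Function.update_self]
    rw [show zPow (adjFactor (M+1)) 0 = _ * _ from rfl]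
    norm_num [Ring.inverse_one]
  have hc0G : constantCoeff G = P0 := by
    rw [hG, map_mul, c0_preFactor, map_prod]
    rw [Finset.prod_eq_one fun n hn =>
      c0_zPow _ (adjFactor_nice n (Finset.mem_Icc.mp hn).1).1.c0 _]
    rw [mul_one]
  have hco : coeff (M+1) (PhiTrunc p a (M+1))
      = coeff (M+1) G + P0 * ((a (M+1)) • (-Tn)) := by
    rw [h1, coeff_mul_nice (by omega) hZ, hc0G, hZe, hAe]
  rw [resPhi, hco, ev_apply, map_add, resPhi, h2, ev_apply]
  have : ev (-1,-1) (P0 * ((a (M+1)) • (-Tn))) = -(a (M+1) : ℚ) := by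
    rw [mul_smul_comm, map_zsmul, mul_neg, map_neg, key_eval, zsmul_eq_mul]
    push_cast
    try ring
  rw [this]
  ring

lemma resPhi_congr (p : ℤ) (N : ℕ) (a a' : ℕ → ℤ) (h : ∀ i, 1 ≤ i → i ≤ N → a i = a' i) :
    resPhi p N a = resPhi p N a' := by
  have hprod : (∏ n ∈ Finset.Icc 1 N, zPow (adjFactor n) (a n))
      = ∏ n ∈ Finset.Icc 1 N, zPow (adjFactor n) (a' n) :=
    Finset.prod_congr rfl fun n hn => by
      rw [h n (Finset.mem_Icc.mp hn).1 (Finset.mem_Icc.mp hn).2]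
  rw [resPhi, resPhi, PhiTrunc, PhiTrunc, hprod]



end St18

/-- For each `N ≥ 2`, the `q₁⁻¹q₂⁻¹`-coefficient of the `z^N`-coefficient of `Φ` has the form
`c·a_N + F(a₁,…,a_{N-1})` with `c` a nonzero integer independent of the sequence; consequently,
the vanishing of all these residues determines the sequence `(a_n)_{n≥1}` uniquely given
`a₁ = p`. -/
theorem statement18 (p : ℤ) (hp : 0 < p) :
    (∀ N : ℕ, 2 ≤ N →
      ∃ c : ℤ, c ≠ 0 ∧
        ∃ F : (ℕ → ℤ) → ℚ,
          (∀ a a' : ℕ → ℤ, (∀ i, i < N → a i = a' i) → F a = F a') ∧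
          ∀ a : ℕ → ℤ, a 1 = p → resPhi p N a = (c : ℚ) * (a N : ℚ) + F a) ∧
    (∀ a a' : ℕ → ℤ, a 1 = p → a' 1 = p →
      (∀ N : ℕ, 1 ≤ N → resPhi p N a = 0) → (∀ N : ℕ, 1 ≤ N → resPhi p N a' = 0) →
      ∀ n : ℕ, 1 ≤ n → a n = a' n) := by
  constructor
  · intro N hN
    refine ⟨-1, by norm_num, fun a => resPhi p N (Function.update a N 0), ?_, ?_⟩
    · intro a a' h
      refine St18.resPhi_congr p N _ _ fun i h1 h2 => ?_
      rcases eq_or_lt_of_le h2 with h3 | h3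
      · rw [h3, Function.update_self, Function.update_self]
      · rw [Function.update_of_ne (by omega), Function.update_of_ne (by omega)]
        exact h i h3
    · intro a _
      rw [St18.resPhi_decomp p N (by omega) a]
      push_cast
      ring
  · intro a a' ha ha' hz hz' n
    induction n using Nat.strong_induction_on with
    | _ n ih =>
      intro hn
      rcases eq_or_lt_of_le hn with h1 | h1
      · rw [← h1, ha, ha']
      · have hd := St18.resPhi_decomp p n (by omega) a
        have hd' := St18.resPhi_decomp p n (by omega) a'
        rw [hz n (by omega)] at hd
        rw [hz' n (by omega)] at hd'
        have hcg : resPhi p n (Function.update a n 0) = resPhi p n (Function.update a' n 0) := by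
          refine St18.resPhi_congr p n _ _ fun i hi1 hi2 => ?_
          rcases eq_or_lt_of_le hi2 with h3 | h3
          · rw [h3, Function.update_self, Function.update_self]
          · rw [Function.update_of_ne (by omega), Function.update_of_ne (by omega)]
            exact ih i h3 hi1
        have : (a n : ℚ) = (a' n : ℚ) := by
          rw [hcg] at hd
          linarith [hd, hd']
        exact_mod_cast this
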